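/- Fix L_C > 0, k > 0, 0 < α < 1/2, K ≥ 0 and S ≥ 0. Let κ : Γ_ℂ × ℝ → ℂ satisfy, for all x ∈ Γ_ℂ and t ∈ ℝ: |κ(x,t)| ≤ K e^{−k|Im x|}(1+|x|+|t|)^{−3/2} when |t| > L_C, and |κ(x,t)| ≤ K (1 + |log|x−t||) e^{−k|Im x|}(1+|x|)^{−3/2} when |t| ≤ L_C and t ≠ x. Let σ : ℝ → ℂ be measurable with |σ(t)| ≤ S(1+|t|)^{−α} for all t ∈ ℝ. Then there is a constant K′ > 0, depending only on k, α, L_C and K, such that for every x ∈ Γ_ℂ the integral ∫_ℝ κ(x,t) σ(t) dt is absolutely convergent and |∫_ℝ κ(x,t) σ(t) dt| ≤ K′ S e^{−k|Im x|}(1+|x|)^{−(α+1/2)}. -/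

import Mathlib

open MeasureTheory Set

noncomputable section

noncomputable section

/-- The region `Γ_L = {z : Re z < -L, Im z ≤ 0}`. -/
def GammaL (L : ℝ) : Set ℂ := {z | z.re < -L ∧ z.im ≤ 0}

/-- The region `Γ_M = {z : |Re z| ≤ L, Im z = 0}`. -/
def GammaM (L : ℝ) : Set ℂ := {z | |z.re| ≤ L ∧ z.im = 0}

/-- The region `Γ_R = {z : Re z > L, Im z ≥ 0}`. -/
def GammaR (L : ℝ) : Set ℂ := {z | L < z.re ∧ 0 ≤ z.im}

/-- The contour region `Γ_ℂ = Γ_L ∪ Γ_M ∪ Γ_R`. -/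
def GammaC (L : ℝ) : Set ℂ := GammaL L ∪ GammaM L ∪ GammaR L

/-- The weight `e^{β|Im x|} (1+|x|)^α`. -/
def cweight (α β : ℝ) (x : ℂ) : ℝ :=
  Real.exp (β * |x.im|) * (1 + ‖x‖) ^ α

/-- The norm `‖f‖_{α,β} = sup_{x ∈ Γ_ℂ} e^{β|Im x|}(1+|x|)^α |f x|`. -/
def cnorm (L α β : ℝ) (f : ℂ → ℂ) : ℝ :=
  sSup ((fun x => cweight α β x * ‖f x‖) '' GammaC L)

/-- Membership in the space `𝒞^{α,β}`: continuous on `Γ_ℂ`, analytic on the interiors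
of `Γ_L` and `Γ_R`, and with finite norm `‖f‖_{α,β}` (the weighted values are bounded). -/
def MemC (L α β : ℝ) (f : ℂ → ℂ) : Prop :=
  ContinuousOn f (GammaC L) ∧
  AnalyticOnNhd ℂ f (interior (GammaL L)) ∧
  AnalyticOnNhd ℂ f (interior (GammaR L)) ∧
  BddAbove ((fun x => cweight α β x * ‖f x‖) '' GammaC L)


open Real

/-!
Split the integral at `|t| = L` and write `Y = 1 + ‖x‖`. On `[-L, L]` the density is bounded
by `S`, and the logarithmic singularity of the kernel is integrable uniformly in `x`: with
`c = Re x` we have `|t - c| ≤ ‖x - t‖ ≤ ‖x‖ + L`, hence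
`|log ‖x - t‖| ≤ log⁺ (‖x‖ + L) + log⁺ |t - c|⁻¹`, and `∫ log⁺ |t - c|⁻¹ dt = 2`. This piece is
therefore `O(Y^(-3/2) log Y) = O(Y^(-(α + 1/2)))`. Off `[-L, L]` the density is at most
`S |t|^(-α)`, and `∫₀^∞ (Y + t)^(-3/2) t^(-α) dt = O(Y^(-(α + 1/2)))`, as one sees by comparing
the integrand with `Y^(-3/2) t^(-α)` on `(0, Y]` and with `t^(-(α + 3/2))` on `(Y, ∞)`.
-/

lemma abs_log_eq_posLog_add_posLog_inv (r : ℝ) : |log r| = log⁺ r + log⁺ r⁻¹ := by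
  rw [posLog_apply, posLog_apply, log_inv]
  rcases le_total 0 (log r) with h | h
  · simp [abs_of_nonneg h, h]
  · simp [abs_of_nonpos h, h]

lemma abs_log_le_posLog_add_posLog_inv {u r B : ℝ} (hu : 0 < u) (hur : u ≤ r) (hrB : r ≤ B) :
    |log r| ≤ log⁺ B + log⁺ u⁻¹ := by
  have hr : 0 < r := hu.trans_le hur
  rw [abs_log_eq_posLog_add_posLog_inv]
  gcongr

lemma posLog_inv_abs_eq_indicator :
    (fun t : ℝ => log⁺ |t|⁻¹) = (Icc (-1) 1).indicator (fun t => -log t) := by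
  ext t
  by_cases ht : t ∈ Icc (-1 : ℝ) 1
  · have habs : |t| ≤ 1 := abs_le.mpr ht
    rw [indicator_of_mem ht, posLog_apply, log_inv, log_abs,
      max_eq_right (neg_nonneg.mpr (by simpa [log_abs] using log_nonpos (abs_nonneg t) habs))]
  · have habs : 1 < |t| := by
      by_contra! h; exact ht (abs_le.mp h)
    rw [indicator_of_notMem ht, posLog_eq_zero_iff, abs_inv, abs_abs]
    exact inv_le_one_of_one_le₀ habs.le

lemma integrable_posLog_inv_abs_sub (c : ℝ) : Integrable fun t : ℝ => log⁺ |t - c|⁻¹ := by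
  refine Integrable.comp_sub_right (f := fun t : ℝ => log⁺ |t|⁻¹) ?_ c
  rw [posLog_inv_abs_eq_indicator, integrable_indicator_iff measurableSet_Icc,
    integrableOn_Icc_iff_integrableOn_Ioc,
    ← intervalIntegrable_iff_integrableOn_Ioc_of_le (by norm_num)]
  exact intervalIntegral.intervalIntegrable_log'.neg

lemma integral_posLog_inv_abs_sub (c : ℝ) : ∫ t, log⁺ |t - c|⁻¹ = 2 := by
  rw [integral_sub_right_eq_self (fun t : ℝ => log⁺ |t|⁻¹) c, posLog_inv_abs_eq_indicator,
    integral_indicator measurableSet_Icc, integral_Icc_eq_integral_Ioc,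
    ← intervalIntegral.integral_of_le (by norm_num), intervalIntegral.integral_neg, integral_log]
  norm_num

lemma abs_log_norm_sub_ofReal_le {x : ℂ} {L t : ℝ} (ht : |t| ≤ L) (htx : t ≠ x.re) :
    |log ‖x - t‖| ≤ log⁺ (‖x‖ + L) + log⁺ |t - x.re|⁻¹ := by
  refine abs_log_le_posLog_add_posLog_inv (abs_pos.mpr (sub_ne_zero.mpr htx)) ?_ ?_
  · simpa [abs_sub_comm] using Complex.abs_re_le_norm (x - t)
  · calc ‖x - t‖ ≤ ‖x‖ + ‖(t : ℂ)‖ := norm_sub_le _ _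
      _ ≤ ‖x‖ + L := by rw [Complex.norm_real, Real.norm_eq_abs]; gcongr

lemma ae_abs_log_norm_sub_ofReal_le (x : ℂ) (L : ℝ) :
    ∀ᵐ (t : ℝ) ∂volume.restrict (Icc (-L) L),
      |log ‖x - t‖| ≤ log⁺ (‖x‖ + L) + log⁺ |t - x.re|⁻¹ := by
  rw [ae_restrict_iff' measurableSet_Icc]
  filter_upwards [Measure.ae_ne (volume : Measure ℝ) x.re] with t htx ht
  exact abs_log_norm_sub_ofReal_le (abs_le.mpr ht) htx

lemma integrableOn_abs_log_norm_sub_ofReal (x : ℂ) (L : ℝ) :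
    IntegrableOn (fun t : ℝ => |log ‖x - t‖|) (Icc (-L) L) := by
  refine Integrable.mono' (g := fun t => log⁺ (‖x‖ + L) + log⁺ |t - x.re|⁻¹)
    (continuous_const.integrableOn_Icc.add (integrable_posLog_inv_abs_sub x.re).integrableOn)
    (Measurable.aestronglyMeasurable (by fun_prop)) ?_
  filter_upwards [ae_abs_log_norm_sub_ofReal_le x L] with t ht
  rwa [Real.norm_of_nonneg (abs_nonneg _)]

lemma setIntegral_abs_log_norm_sub_ofReal_le (x : ℂ) {L : ℝ} (hL : 0 ≤ L) :
    ∫ t in Icc (-L) L, |log ‖x - t‖| ≤ 2 * L * log⁺ (‖x‖ + L) + 2 := by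
  have hsing := integrable_posLog_inv_abs_sub x.re
  calc ∫ t in Icc (-L) L, |log ‖x - t‖|
      ≤ ∫ t in Icc (-L) L, (log⁺ (‖x‖ + L) + log⁺ |t - x.re|⁻¹) :=
        integral_mono_ae (integrableOn_abs_log_norm_sub_ofReal x L)
          (continuous_const.integrableOn_Icc.add hsing.integrableOn)
          (ae_abs_log_norm_sub_ofReal_le x L)
    _ = 2 * L * log⁺ (‖x‖ + L) + ∫ t in Icc (-L) L, log⁺ |t - x.re|⁻¹ := by
        rw [integral_add continuous_const.integrableOn_Icc hsing.integrableOn, setIntegral_const,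
          Real.volume_real_Icc_of_le (by linarith), smul_eq_mul]
        ring
    _ ≤ 2 * L * log⁺ (‖x‖ + L) + ∫ t, log⁺ |t - x.re|⁻¹ := by
        grw [setIntegral_le_integral hsing (ae_of_all _ fun _ => posLog_nonneg)]
    _ = 2 * L * log⁺ (‖x‖ + L) + 2 := by rw [integral_posLog_inv_abs_sub]

lemma posLog_le_rpow_div {x ε : ℝ} (hx : 0 ≤ x) (hε : 0 < ε) : log⁺ x ≤ x ^ ε / ε :=
  max_le (by positivity) (log_le_rpow_div hx hε)

lemma setIntegral_one_add_abs_log_norm_sub_ofReal_le (x : ℂ) {L ε : ℝ} (hL : 0 ≤ L)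
    (hε : 0 < ε) :
    ∫ t in Icc (-L) L, (1 + |log ‖x - t‖|) ≤
      (2 * L * (1 + log 2 + log⁺ L + 1 / ε) + 2) * (1 + ‖x‖) ^ ε := by
  have hY : 1 ≤ (1 + ‖x‖) ^ ε := one_le_rpow (by simp) hε.le
  have hlog : log⁺ (‖x‖ + L) ≤ log 2 + log⁺ L + (1 + ‖x‖) ^ ε / ε :=
    calc log⁺ (‖x‖ + L) ≤ log 2 + log⁺ ‖x‖ + log⁺ L := posLog_add
      _ ≤ log 2 + log⁺ (1 + ‖x‖) + log⁺ L := by gcongr; simp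
      _ ≤ log 2 + log⁺ L + (1 + ‖x‖) ^ ε / ε := by
        grw [posLog_le_rpow_div (by positivity) hε]; linarith
  rw [integral_add continuous_const.integrableOn_Icc (integrableOn_abs_log_norm_sub_ofReal x L),
    setIntegral_const, Real.volume_real_Icc_of_le (by linarith), smul_eq_mul]
  grw [setIntegral_abs_log_norm_sub_ofReal_le x hL, hlog]
  have hconst : 0 ≤ 2 * L * (1 + log 2 + log⁺ L) + 2 := by
    have := log_nonneg one_le_two; have : 0 ≤ log⁺ L := posLog_nonneg; positivity
  rw [div_eq_mul_one_div _ ε]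
  nlinarith [mul_le_mul_of_nonneg_left hY hconst]

theorem MeasureTheory.IntegrableOn.integrable_comp_abs {E : Type*} [NormedAddCommGroup E]
    {f : ℝ → E} (hf : IntegrableOn f (Ioi 0)) : Integrable fun x => f |x| := by
  have hIoi : IntegrableOn (fun x => f |x|) (Ioi 0) :=
    hf.congr_fun (fun x hx => by rw [abs_of_pos hx]) measurableSet_Ioi
  have hIic : IntegrableOn (fun x => f |x|) (Iic 0) := by
    have hneg : MeasurableEmbedding fun x : ℝ => -x := (Homeomorph.neg ℝ).measurableEmbedding
    rw [← Measure.map_neg_eq_self (volume : Measure ℝ), hneg.integrableOn_map_iff]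
    simp_rw [Function.comp_def, abs_neg, neg_preimage, neg_Iic, neg_zero]
    exact (integrableOn_Ici_iff_integrableOn_Ioi (by finiteness)).mpr hIoi
  simpa using hIic.union hIoi

section PowerTail

variable {Y α β : ℝ}

lemma integrableOn_Ioc_add_rpow_mul_rpow_and_integral_le (hY : 0 < Y) (hα : α < 1)
    (hβ : 0 ≤ β) :
    IntegrableOn (fun t => (Y + t) ^ (-β) * t ^ (-α)) (Ioc 0 Y) ∧
      ∫ t in Ioc 0 Y, (Y + t) ^ (-β) * t ^ (-α) ≤ Y ^ (1 - α - β) / (1 - α) := by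
  have hpow : IntegrableOn (fun t : ℝ => Y ^ (-β) * t ^ (-α)) (Ioc 0 Y) :=
    ((intervalIntegrable_iff_integrableOn_Ioc_of_le hY.le).mp
      (intervalIntegral.intervalIntegrable_rpow' (by linarith))).const_mul _
  have hle : ∀ t ∈ Ioc 0 Y, (Y + t) ^ (-β) * t ^ (-α) ≤ Y ^ (-β) * t ^ (-α) := fun t ht =>
    mul_le_mul_of_nonneg_right (rpow_le_rpow_of_nonpos hY (by linarith [ht.1]) (by linarith))
      (rpow_nonneg ht.1.le _)
  have hint : IntegrableOn (fun t => (Y + t) ^ (-β) * t ^ (-α)) (Ioc 0 Y) := by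
    refine hpow.mono' (Measurable.aestronglyMeasurable (by fun_prop)) ?_
    refine (ae_restrict_iff' measurableSet_Ioc).mpr (ae_of_all _ fun t ht => ?_)
    rw [Real.norm_of_nonneg (by have := ht.1; positivity)]
    exact hle t ht
  refine ⟨hint, (setIntegral_mono_on hint hpow measurableSet_Ioc hle).trans_eq ?_⟩
  rw [integral_const_mul, ← intervalIntegral.integral_of_le hY.le,
    integral_rpow (by left; linarith), zero_rpow (by linarith), sub_zero, mul_div_assoc',
    ← rpow_add hY]
  ring_nf

lemma integrableOn_Ioi_add_rpow_mul_rpow_and_integral_le (hY : 0 < Y) (hαβ : 1 < α + β)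
    (hβ : 0 ≤ β) :
    IntegrableOn (fun t => (Y + t) ^ (-β) * t ^ (-α)) (Ioi Y) ∧
      ∫ t in Ioi Y, (Y + t) ^ (-β) * t ^ (-α) ≤ Y ^ (1 - α - β) / (α + β - 1) := by
  have hpow : IntegrableOn (fun t : ℝ => t ^ (-(α + β))) (Ioi Y) :=
    integrableOn_Ioi_rpow_of_lt (by linarith) hY
  have hle : ∀ t ∈ Ioi Y, (Y + t) ^ (-β) * t ^ (-α) ≤ t ^ (-(α + β)) := fun t ht => by
    have ht0 : 0 < t := hY.trans ht
    rw [neg_add, rpow_add ht0, mul_comm]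
    exact mul_le_mul_of_nonneg_left (rpow_le_rpow_of_nonpos ht0 (by linarith) (by linarith))
      (rpow_nonneg ht0.le _)
  have hint : IntegrableOn (fun t => (Y + t) ^ (-β) * t ^ (-α)) (Ioi Y) := by
    refine hpow.mono' (Measurable.aestronglyMeasurable (by fun_prop)) ?_
    refine (ae_restrict_iff' measurableSet_Ioi).mpr (ae_of_all _ fun t ht => ?_)
    have ht0 : 0 < t := hY.trans ht
    rw [Real.norm_of_nonneg (by positivity)]
    exact hle t ht
  refine ⟨hint, (setIntegral_mono_on hint hpow measurableSet_Ioi hle).trans_eq ?_⟩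
  rw [integral_Ioi_rpow_of_lt (by linarith) hY, ← neg_div_neg_eq, neg_neg]
  ring_nf

lemma integrable_add_abs_rpow_mul_abs_rpow_and_integral_le (hY : 0 < Y) (hα : α < 1)
    (hαβ : 1 < α + β) (hβ : 0 ≤ β) :
    Integrable (fun t => (Y + |t|) ^ (-β) * |t| ^ (-α)) ∧
      ∫ t, (Y + |t|) ^ (-β) * |t| ^ (-α) ≤
        2 * (1 / (1 - α) + 1 / (α + β - 1)) * Y ^ (1 - α - β) := by
  obtain ⟨hint₁, hle₁⟩ := integrableOn_Ioc_add_rpow_mul_rpow_and_integral_le hY hα hβ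
  obtain ⟨hint₂, hle₂⟩ := integrableOn_Ioi_add_rpow_mul_rpow_and_integral_le hY hαβ hβ
  have hsplit := Ioc_union_Ioi_eq_Ioi hY.le
  have hint : IntegrableOn (fun t => (Y + t) ^ (-β) * t ^ (-α)) (Ioi 0) := by
    rw [← hsplit]; exact hint₁.union hint₂
  refine ⟨hint.integrable_comp_abs, ?_⟩
  rw [integral_comp_abs (f := fun t => (Y + t) ^ (-β) * t ^ (-α)), ← hsplit,
    setIntegral_union (Ioc_disjoint_Ioi le_rfl) measurableSet_Ioi hint₁ hint₂]
  calc 2 * ((∫ t in Ioc 0 Y, (Y + t) ^ (-β) * t ^ (-α)) + ∫ t in Ioi Y, (Y + t) ^ (-β) * t ^ (-α))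
      ≤ 2 * (Y ^ (1 - α - β) / (1 - α) + Y ^ (1 - α - β) / (α + β - 1)) := by gcongr
    _ = 2 * (1 / (1 - α) + 1 / (α + β - 1)) * Y ^ (1 - α - β) := by ring

end PowerTail

def kernelMajorant (L α : ℝ) (x : ℂ) (t : ℝ) : ℝ :=
  (1 + ‖x‖) ^ (-(3 / 2 : ℝ)) * (Icc (-L) L).indicator (fun t => 1 + |log ‖x - t‖|) t +
    (1 + ‖x‖ + |t|) ^ (-(3 / 2 : ℝ)) * |t| ^ (-α)

def kernelMajorantConst (L α : ℝ) : ℝ :=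
  2 * L * (1 + log 2 + log⁺ L + 1 / (1 - α)) + 2 + 2 * (1 / (1 - α) + 1 / (α + 1 / 2))

lemma norm_mul_le_kernelMajorant {κ σ : ℝ → ℂ} {x : ℂ} {L α K S E t : ℝ} (hL : 0 < L)
    (hα : 0 ≤ α) (hK : 0 ≤ K) (hS : 0 ≤ S) (hE : 0 ≤ E)
    (hout : ∀ t : ℝ, L < |t| → ‖κ t‖ ≤ K * E * (1 + ‖x‖ + |t|) ^ (-(3 / 2 : ℝ)))
    (hin : ∀ t : ℝ, |t| ≤ L → (t : ℂ) ≠ x →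
      ‖κ t‖ ≤ K * (1 + |log ‖x - t‖|) * E * (1 + ‖x‖) ^ (-(3 / 2 : ℝ)))
    (hσ : ∀ t : ℝ, ‖σ t‖ ≤ S * (1 + |t|) ^ (-α)) (htx : (t : ℂ) ≠ x) :
    ‖κ t * σ t‖ ≤ K * S * E * kernelMajorant L α x t := by
  rw [norm_mul, kernelMajorant]
  rcases le_or_gt |t| L with ht | ht
  · have hκt := hin t ht htx
    have hσt : ‖σ t‖ ≤ S := (hσ t).trans
      (mul_le_of_le_one_right hS (rpow_le_one_of_one_le_of_nonpos (by simp) (by linarith)))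
    calc ‖κ t‖ * ‖σ t‖ ≤ K * (1 + |log ‖x - t‖|) * E * (1 + ‖x‖) ^ (-(3 / 2 : ℝ)) * S :=
          mul_le_mul hκt hσt (norm_nonneg _) ((norm_nonneg _).trans hκt)
      _ = K * S * E * ((1 + ‖x‖) ^ (-(3 / 2 : ℝ)) * (1 + |log ‖x - t‖|)) := by ring
      _ ≤ _ := by
        rw [indicator_of_mem (mem_Icc.mpr (abs_le.mp ht))]
        gcongr
        exact le_add_of_nonneg_right (by positivity)
  · have ht0 : 0 < |t| := hL.trans ht
    have hκt := hout t ht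
    have hσt : ‖σ t‖ ≤ S * |t| ^ (-α) := (hσ t).trans (mul_le_mul_of_nonneg_left
      (rpow_le_rpow_of_nonpos ht0 (by linarith) (by linarith)) hS)
    rw [indicator_of_notMem fun h => (abs_le.mpr (mem_Icc.mp h)).not_gt ht]
    calc ‖κ t‖ * ‖σ t‖ ≤ K * E * (1 + ‖x‖ + |t|) ^ (-(3 / 2 : ℝ)) * (S * |t| ^ (-α)) :=
          mul_le_mul hκt hσt (norm_nonneg _) ((norm_nonneg _).trans hκt)
      _ = _ := by ring

lemma integrable_indicator_one_add_abs_log_norm_sub_ofReal (x : ℂ) (L : ℝ) :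
    Integrable ((Icc (-L) L).indicator fun t : ℝ => 1 + |log ‖x - t‖|) :=
  (integrable_indicator_iff measurableSet_Icc).mpr
    (continuous_const.integrableOn_Icc.add (integrableOn_abs_log_norm_sub_ofReal x L))

lemma integrable_kernelMajorant (x : ℂ) (L : ℝ) {α : ℝ} (hα₀ : -(1 / 2) < α) (hα₁ : α < 1) :
    Integrable (kernelMajorant L α x) :=
  ((integrable_indicator_one_add_abs_log_norm_sub_ofReal x L).const_mul _).add
    (integrable_add_abs_rpow_mul_abs_rpow_and_integral_le (β := 3 / 2) (by positivity) hα₁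
      (by linarith) (by norm_num)).1

lemma integral_kernelMajorant_le (x : ℂ) {L α : ℝ} (hL : 0 ≤ L) (hα₀ : -(1 / 2) < α)
    (hα₁ : α < 1) :
    ∫ t, kernelMajorant L α x t ≤ kernelMajorantConst L α * (1 + ‖x‖) ^ (-(α + 1 / 2)) := by
  have hY : 0 < 1 + ‖x‖ := by positivity
  obtain ⟨hout, hout_le⟩ := integrable_add_abs_rpow_mul_abs_rpow_and_integral_le (α := α)
    (β := 3 / 2) hY hα₁ (by linarith) (by norm_num)
  have hin_le := setIntegral_one_add_abs_log_norm_sub_ofReal_le x hL (sub_pos.mpr hα₁)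
  simp only [kernelMajorant]
  rw [integral_add ((integrable_indicator_one_add_abs_log_norm_sub_ofReal x L).const_mul _) hout,
    integral_const_mul, integral_indicator measurableSet_Icc]
  calc (1 + ‖x‖) ^ (-(3 / 2 : ℝ)) * (∫ t in Icc (-L) L, (1 + |log ‖x - t‖|)) +
        ∫ t, (1 + ‖x‖ + |t|) ^ (-(3 / 2 : ℝ)) * |t| ^ (-α)
      ≤ (1 + ‖x‖) ^ (-(3 / 2 : ℝ)) *
          ((2 * L * (1 + log 2 + log⁺ L + 1 / (1 - α)) + 2) * (1 + ‖x‖) ^ (1 - α)) +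
        2 * (1 / (1 - α) + 1 / (α + 3 / 2 - 1)) * (1 + ‖x‖) ^ (1 - α - 3 / 2) := by gcongr
    _ = kernelMajorantConst L α * (1 + ‖x‖) ^ (-(α + 1 / 2)) := by
      rw [mul_left_comm, ← rpow_add hY, kernelMajorantConst]; ring_nf

theorem statement_5 (L k α K : ℝ) (hL : 0 < L)
    (hα0 : 0 < α) (hα : α < 1/2) (hK : 0 ≤ K) :
    ∃ K' > 0, ∀ (κ : ℂ → ℝ → ℂ) (σ : ℝ → ℂ) (S : ℝ),
      (∀ x : ℂ, Measurable (κ x)) →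
      (∀ x ∈ GammaC L, ∀ t : ℝ, L < |t| →
        ‖κ x t‖ ≤
          K * Real.exp (-k * |x.im|) * (1 + ‖x‖ + |t|) ^ (-(3/2 : ℝ))) →
      (∀ x ∈ GammaC L, ∀ t : ℝ, |t| ≤ L → (t : ℂ) ≠ x →
        ‖κ x t‖ ≤ K * (1 + |Real.log (‖x - t‖)|) *
          Real.exp (-k * |x.im|) * (1 + ‖x‖) ^ (-(3/2 : ℝ))) →
      Measurable σ →
      (∀ t : ℝ, ‖σ t‖ ≤ S * (1 + |t|) ^ (-α)) →
      ∀ x ∈ GammaC L,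
        Integrable (fun t => κ x t * σ t) volume ∧
        ‖∫ t, κ x t * σ t‖ ≤
          K' * S * Real.exp (-k * |x.im|) * (1 + ‖x‖) ^ (-(α + 1/2)) := by
  refine ⟨max (K * kernelMajorantConst L α) 1, lt_max_of_lt_right one_pos, ?_⟩
  intro κ σ S hκ hout hin hσm hσ x hx
  have hS : 0 ≤ S := (norm_nonneg _).trans (by simpa using hσ 0)
  have hE := exp_pos (-k * |x.im|)
  have hdom : ∀ᵐ t, ‖κ x t * σ t‖ ≤ K * S * exp (-k * |x.im|) * kernelMajorant L α x t := by
    filter_upwards [Measure.ae_ne volume x.re] with t ht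
    exact norm_mul_le_kernelMajorant hL hα0.le hK hS hE.le (hout x hx) (hin x hx) hσ
      fun h => ht (by simp [← h])
  have hmaj := (integrable_kernelMajorant x L (α := α) (by linarith) (by linarith)).const_mul
    (K * S * exp (-k * |x.im|))
  refine ⟨hmaj.mono' ((hκ x).mul hσm).aestronglyMeasurable hdom, ?_⟩
  have hP : 0 ≤ S * exp (-k * |x.im|) * (1 + ‖x‖) ^ (-(α + 1 / 2)) := by positivity
  calc ‖∫ t, κ x t * σ t‖ ≤ ∫ t, K * S * exp (-k * |x.im|) * kernelMajorant L α x t :=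
        norm_integral_le_of_norm_le hmaj hdom
    _ ≤ K * S * exp (-k * |x.im|) * (kernelMajorantConst L α * (1 + ‖x‖) ^ (-(α + 1 / 2))) := by
        rw [integral_const_mul]
        gcongr
        exact integral_kernelMajorant_le x hL.le (by linarith) (by linarith)
    _ ≤ _ := by
        linarith [mul_le_mul_of_nonneg_right (le_max_left (K * kernelMajorantConst L α) 1) hP]
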